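/- There exists an absolute constant C4 > 0 such that the following holds. Let n ≥ 1, a ≥ 0 and μ ∈ ℝⁿ. Let F be a family of n×n ordered linear smoothers and let d be the semimetric on n×n matrices given by d(A, B)² = a‖A − B‖_F² + ‖(A − B)μ‖². Then γ_2(F, d) + γ_1(F, d) ≤ C4 Δ(F, d). -/

import Mathlib

open MeasureTheory ProbabilityTheory Matrix BigOperators ENNReal

noncomputable section

/-- Squared Euclidean norm of a vector in `ℝⁿ`. -/
def sqnorm {n : ℕ} (v : Fin n → ℝ) : ℝ := ∑ i, v i ^ 2

/-- Squared Frobenius norm of an `n × n` matrix. -/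
def frobSq {n : ℕ} (A : Matrix (Fin n) (Fin n) ℝ) : ℝ := ∑ i, ∑ j, A i j ^ 2

/-- A family of ordered linear smoothers. -/
def IsOrderedSmootherFamily {n : ℕ} (F : Set (Matrix (Fin n) (Fin n) ℝ)) : Prop :=
  (∀ A ∈ F, A.IsSymm ∧ ∀ w : Fin n → ℝ, 0 ≤ w ⬝ᵥ A.mulVec w ∧ w ⬝ᵥ A.mulVec w ≤ sqnorm w) ∧
  (∀ A ∈ F, ∀ B ∈ F, A * B = B * A) ∧
  (∀ A ∈ F, ∀ B ∈ F, (B - A).PosSemidef ∨ (A - B).PosSemidef)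

/-- The semimetric `d(A, B) = √(a ‖A − B‖_F² + ‖(A − B)μ‖²)`. -/
def dmet {n : ℕ} (a : ℝ) (μ : Fin n → ℝ) (A B : Matrix (Fin n) (Fin n) ℝ) : ℝ :=
  Real.sqrt (a * frobSq (A - B) + sqnorm ((A - B).mulVec μ))

/-- Diameter `Δ(T, d) = sup_{A,B ∈ T} d(A, B)`, valued in `ℝ≥0∞`. -/
def ediam {X : Type*} (T : Set X) (d : X → X → ℝ) : ℝ≥0∞ :=
  ⨆ A ∈ T, ⨆ B ∈ T, ENNReal.ofReal (d A B)

/-- Distance from a point to a set: `d(t, S) = inf_{s ∈ S} d(t, s)`, valued in `ℝ≥0∞`. -/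
def setDist {X : Type*} (d : X → X → ℝ) (t : X) (S : Set X) : ℝ≥0∞ :=
  ⨅ s ∈ S, ENNReal.ofReal (d t s)

/-- An admissible sequence of subsets of `T`: `|T₀| = 1` and `|T_k| ≤ 2^(2^k)`. -/
def IsAdmissible {X : Type*} (T : Set X) (Ts : ℕ → Set X) : Prop :=
  (∀ k, Ts k ⊆ T) ∧ (Ts 0).ncard = 1 ∧ ∀ k, (Ts k).Finite ∧ (Ts k).ncard ≤ 2 ^ 2 ^ k

/-- Talagrand's generic chaining functional
`γ_α(T, d) = inf over admissible sequences of sup_{t ∈ T} ∑_{k ≥ 1} 2^{k/α} d(t, T_k)`. -/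
def gammaFunc {X : Type*} (α : ℝ) (T : Set X) (d : X → X → ℝ) : ℝ≥0∞ :=
  ⨅ (Ts : ℕ → Set X) (_ : IsAdmissible T Ts),
    ⨆ t ∈ T, ∑' k : ℕ,
      ENNReal.ofReal (2 ^ (((k : ℝ) + 1) / α)) * setDist d t (Ts (k + 1))

set_option linter.unusedSectionVars false

namespace GammaAux

variable {m : Type*} [Fintype m] [DecidableEq m]

lemma psd_mul_of_commute {P Q : Matrix m m ℝ}
    (hP : P.PosSemidef) (hQ : Q.PosSemidef) (hc : P * Q = Q * P) :
    (P * Q).PosSemidef := by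
  have hH := hP.isHermitian
  set U : Matrix m m ℝ := (hH.eigenvectorUnitary : Matrix m m ℝ) with hUdef
  have h1 : U * star U = 1 := mem_unitaryGroup_iff.mp (hH.eigenvectorUnitary).2
  have h2 : star U * U = 1 := mem_unitaryGroup_iff'.mp (hH.eigenvectorUnitary).2
  set d : m → ℝ := hH.eigenvalues with hddef
  have hPd : star U * P * U = diagonal d := by
    have := hH.conjStarAlgAut_star_eigenvectorUnitary
    rwa [Unitary.conjStarAlgAut_star_apply, RCLike.ofReal_real_eq_id,
      Function.id_comp] at this
  set Q' : Matrix m m ℝ := star U * Q * U with hQ'def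
  have hQ'psd : Q'.PosSemidef := by
    have := hQ.conjTranspose_mul_mul_same U
    rwa [← Matrix.star_eq_conjTranspose] at this
  have key : diagonal d * Q' = star U * (P * Q) * U := by
    rw [← hPd, hQ'def]
    calc (star U * P * U) * (star U * Q * U)
        = star U * P * (U * star U) * Q * U := by noncomm_ring
      _ = star U * (P * Q) * U := by rw [h1]; noncomm_ring
  have key2 : Q' * diagonal d = star U * (P * Q) * U := by
    rw [← hPd, hQ'def, hc]
    calc (star U * Q * U) * (star U * P * U)
        = star U * Q * (U * star U) * P * U := by noncomm_ring
      _ = star U * (Q * P) * U := by rw [h1]; noncomm_ring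
  have hcomm : diagonal d * Q' = Q' * diagonal d := by rw [key, key2]
  have hentry : ∀ i j, d i * Q' i j = Q' i j * d j := by
    intro i j
    have := congrFun (congrFun hcomm i) j
    rwa [Matrix.diagonal_mul, Matrix.mul_diagonal] at this
  have hdnn : ∀ i, 0 ≤ d i := hP.eigenvalues_nonneg
  have hkey2 : ∀ i j, d i * Q' i j = (Real.sqrt (d i) * Real.sqrt (d j)) * Q' i j := by
    intro i j
    by_cases h : Q' i j = 0
    · simp [h]
    · have hd : d i = d j := by
        have := hentry i j
        have h2 : (d i - d j) * Q' i j = 0 := by ring_nf; linarith [this]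
        rcases mul_eq_zero.mp h2 with h3 | h3
        · linarith
        · exact absurd h3 h
      rw [hd, Real.mul_self_sqrt (hdnn j)]
  have hDQ : (diagonal d * Q').PosSemidef := by
    refine .of_dotProduct_mulVec_nonneg ?_ ?_
    · have : (diagonal d * Q')ᴴ = Q'ᴴ * (diagonal d)ᴴ := conjTranspose_mul _ _
      rw [Matrix.IsHermitian]
      rw [this, hQ'psd.isHermitian, (Matrix.isHermitian_diagonal_iff.mpr
        (fun i => IsSelfAdjoint.of_nonneg (hdnn i))), hcomm]
    · intro x
      have hy := hQ'psd.dotProduct_mulVec_nonneg (fun i => Real.sqrt (d i) * x i)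
      simp only [star_trivial] at hy ⊢
      calc (0:ℝ) ≤ _ := hy
        _ = x ⬝ᵥ (diagonal d * Q') *ᵥ x := by
          simp only [dotProduct, mulVec, Matrix.diagonal_mul]
          rw [Finset.sum_congr rfl]
          intro i _
          simp only [dotProduct, Finset.mul_sum, Finset.sum_mul]
          rw [Finset.sum_congr rfl]
          intro j _
          rw [hkey2 i j]
          ring
  have final : P * Q = U * (diagonal d * Q') * star U := by
    rw [key]
    calc P * Q = (U * star U) * (P * Q) * (U * star U) := by rw [h1]; noncomm_ring
      _ = U * (star U * (P * Q) * U) * star U := by noncomm_ring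
  rw [final]
  have := hDQ.mul_mul_conjTranspose_same U
  rwa [← Matrix.star_eq_conjTranspose] at this

lemma psd_entry_sum_nonneg {P Q : Matrix m m ℝ}
    (hP : P.PosSemidef) (hQ : Q.PosSemidef) (hc : P * Q = Q * P) :
    0 ≤ ∑ i, ∑ j, P i j * Q i j := by
  have hPQ := psd_mul_of_commute hP hQ hc
  have hdiag : ∀ i, 0 ≤ (P * Q) i i := by
    intro i
    have := hPQ.dotProduct_mulVec_nonneg (Pi.single i 1)
    simpa [single_dotProduct, mulVec_single] using this
  have : ∑ i, ∑ j, P i j * Q i j = ∑ i, (P * Q) i i := by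
    refine Finset.sum_congr rfl fun i _ => ?_
    rw [Matrix.mul_apply]
    refine Finset.sum_congr rfl fun j _ => ?_
    rw [show Q j i = Q i j by rw [← hQ.isHermitian.apply i j]; simp]
  rw [this]
  exact Finset.sum_nonneg fun i _ => hdiag i

lemma psd_mulVec_dot_nonneg {P Q : Matrix m m ℝ} (μ : m → ℝ)
    (hP : P.PosSemidef) (hQ : Q.PosSemidef) (hc : P * Q = Q * P) :
    0 ≤ (P *ᵥ μ) ⬝ᵥ (Q *ᵥ μ) := by
  have hPQ := psd_mul_of_commute hP hQ hc
  have h := hPQ.dotProduct_mulVec_nonneg μ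
  rw [star_trivial, ← Matrix.mulVec_mulVec] at h
  have hPt : Pᵀ = P := Matrix.ext fun i j => by
    simpa using hP.isHermitian.apply i j
  rwa [Matrix.dotProduct_mulVec, show Matrix.vecMul μ P = P *ᵥ μ by
    rw [← Matrix.mulVec_transpose, hPt]] at h


variable {n : ℕ}

def Bf (a : ℝ) (μ : Fin n → ℝ) (M : Matrix (Fin n) (Fin n) ℝ) : ℝ :=
  a * frobSq M + sqnorm (M.mulVec μ)

def Bc (a : ℝ) (μ : Fin n → ℝ) (M N : Matrix (Fin n) (Fin n) ℝ) : ℝ :=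
  a * (∑ i, ∑ j, M i j * N i j) + (M.mulVec μ) ⬝ᵥ (N.mulVec μ)

lemma Bf_nonneg {a : ℝ} (ha : 0 ≤ a) (μ : Fin n → ℝ) (M : Matrix (Fin n) (Fin n) ℝ) :
    0 ≤ Bf a μ M := by
  have h1 : 0 ≤ frobSq M :=
    Finset.sum_nonneg fun i _ => Finset.sum_nonneg fun j _ => sq_nonneg _
  have h2 : 0 ≤ sqnorm (M.mulVec μ) := Finset.sum_nonneg fun i _ => sq_nonneg _
  have := mul_nonneg ha h1
  unfold Bf; linarith

lemma sqnorm_add (v w : Fin n → ℝ) : sqnorm (v + w) = sqnorm v + sqnorm w + 2 * (v ⬝ᵥ w) := by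
  unfold sqnorm dotProduct
  rw [Finset.mul_sum, ← Finset.sum_add_distrib, ← Finset.sum_add_distrib]
  exact Finset.sum_congr rfl fun i _ => by simp only [Pi.add_apply]; ring

lemma frobSq_add (M N : Matrix (Fin n) (Fin n) ℝ) :
    frobSq (M + N) = frobSq M + frobSq N + 2 * ∑ i, ∑ j, M i j * N i j := by
  unfold frobSq
  rw [Finset.mul_sum, ← Finset.sum_add_distrib, ← Finset.sum_add_distrib]
  refine Finset.sum_congr rfl fun i _ => ?_
  rw [Finset.mul_sum, ← Finset.sum_add_distrib, ← Finset.sum_add_distrib]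
  exact Finset.sum_congr rfl fun j _ => by simp only [Matrix.add_apply]; ring

lemma Bf_add (a : ℝ) (μ : Fin n → ℝ) (M N : Matrix (Fin n) (Fin n) ℝ) :
    Bf a μ (M + N) = Bf a μ M + Bf a μ N + 2 * Bc a μ M N := by
  unfold Bf Bc
  rw [frobSq_add, Matrix.add_mulVec, sqnorm_add]
  ring

lemma Bf_neg (a : ℝ) (μ : Fin n → ℝ) (M : Matrix (Fin n) (Fin n) ℝ) :
    Bf a μ (-M) = Bf a μ M := by
  unfold Bf frobSq sqnorm
  simp [Matrix.neg_mulVec, neg_sq]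

lemma Bc_nonneg {a : ℝ} (ha : 0 ≤ a) (μ : Fin n → ℝ) {P Q : Matrix (Fin n) (Fin n) ℝ}
    (hP : P.PosSemidef) (hQ : Q.PosSemidef) (hc : P * Q = Q * P) :
    0 ≤ Bc a μ P Q :=
  add_nonneg (mul_nonneg ha (psd_entry_sum_nonneg hP hQ hc))
    (psd_mulVec_dot_nonneg μ hP hQ hc)

lemma Bc_neg_right (a : ℝ) (μ : Fin n → ℝ) (M N : Matrix (Fin n) (Fin n) ℝ) :
    Bc a μ M (-N) = -Bc a μ M N := by
  unfold Bc
  rw [Matrix.neg_mulVec, dotProduct_neg]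
  simp only [Matrix.neg_apply, mul_neg, Finset.sum_neg_distrib]
  ring

lemma Bc_le {a : ℝ} (ha : 0 ≤ a) (μ : Fin n → ℝ) (M N : Matrix (Fin n) (Fin n) ℝ) :
    Bc a μ M N ≤ (Bf a μ M + Bf a μ N) / 2 := by
  have h := Bf_nonneg ha μ (M - N)
  have e : Bf a μ (M - N) = Bf a μ M + Bf a μ N - 2 * Bc a μ M N := by
    rw [sub_eq_add_neg, Bf_add, Bf_neg, Bc_neg_right]
    ring
  linarith [e ▸ h]

lemma diff_comm {X Y Z W : Matrix (Fin n) (Fin n) ℝ}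
    (hXZ : X * Z = Z * X) (hXW : X * W = W * X)
    (hYZ : Y * Z = Z * Y) (hYW : Y * W = W * Y) :
    (X - Y) * (Z - W) = (Z - W) * (X - Y) := by
  rw [sub_mul, sub_mul, mul_sub, mul_sub, mul_sub, mul_sub, hXZ, hXW, hYZ, hYW]
  abel

open scoped Classical in
def phi (a : ℝ) (μ : Fin n → ℝ) (A0 A : Matrix (Fin n) (Fin n) ℝ) : ℝ :=
  if (A - A0).PosSemidef then Bf a μ (A - A0) else -Bf a μ (A - A0)

lemma phi_of_pos {a : ℝ} {μ : Fin n → ℝ} {A0 A : Matrix (Fin n) (Fin n) ℝ}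
    (h : (A - A0).PosSemidef) : phi a μ A0 A = Bf a μ (A - A0) := by
  unfold phi; rw [if_pos h]

lemma phi_of_neg {a : ℝ} {μ : Fin n → ℝ} {A0 A : Matrix (Fin n) (Fin n) ℝ}
    (h : ¬(A - A0).PosSemidef) : phi a μ A0 A = -Bf a μ (A0 - A) := by
  unfold phi
  rw [if_neg h, show A - A0 = -(A0 - A) from (neg_sub A0 A).symm, Bf_neg]

lemma phi_abs {a : ℝ} (ha : 0 ≤ a) (μ : Fin n → ℝ) (A0 A : Matrix (Fin n) (Fin n) ℝ) :
    |phi a μ A0 A| = Bf a μ (A - A0) := by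
  unfold phi
  split
  · exact abs_of_nonneg (Bf_nonneg ha μ _)
  · rw [abs_neg]; exact abs_of_nonneg (Bf_nonneg ha μ _)

lemma embed_le {a : ℝ} (ha : 0 ≤ a) (μ : Fin n → ℝ)
    {F : Set (Matrix (Fin n) (Fin n) ℝ)} (hF : IsOrderedSmootherFamily F)
    {A0 A B : Matrix (Fin n) (Fin n) ℝ} (hA0 : A0 ∈ F) (hA : A ∈ F) (hB : B ∈ F)
    (hBA : (B - A).PosSemidef) :
    Bf a μ (A - B) ≤ 2 * |phi a μ A0 A - phi a μ A0 B| := by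
  obtain ⟨_, hcomm, htot⟩ := hF
  have hBfsym : Bf a μ (A - B) = Bf a μ (B - A) := by rw [← Bf_neg, neg_sub]
  by_cases h1 : (A - A0).PosSemidef
  · have h2 : (B - A0).PosSemidef := by
      have := hBA.add h1
      rwa [sub_add_sub_cancel] at this
    have hc : (B - A) * (A - A0) = (A - A0) * (B - A) :=
      diff_comm (hcomm B hB A hA) (hcomm B hB A0 hA0) rfl (hcomm A hA A0 hA0)
    have hcross := Bc_nonneg ha μ hBA h1 hc
    have hsplit : Bf a μ (B - A0)
        = Bf a μ (B - A) + Bf a μ (A - A0) + 2 * Bc a μ (B - A) (A - A0) := by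
      rw [← Bf_add, sub_add_sub_cancel]
    rw [hBfsym, phi_of_pos h1, phi_of_pos h2]
    have h4 : Bf a μ (B - A0) - Bf a μ (A - A0)
        ≤ |Bf a μ (A - A0) - Bf a μ (B - A0)| := by
      rw [abs_sub_comm]; exact le_abs_self _
    have h5 : (0:ℝ) ≤ |Bf a μ (A - A0) - Bf a μ (B - A0)| := abs_nonneg _
    linarith
  · have h1' : (A0 - A).PosSemidef := by
      rcases htot A hA A0 hA0 with h | h
      · exact h
      · exact absurd h h1
    have hphiA : phi a μ A0 A = -Bf a μ (A0 - A) := phi_of_neg h1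
    by_cases h2 : (B - A0).PosSemidef
    · have hphiB : phi a μ A0 B = Bf a μ (B - A0) := phi_of_pos h2
      have hc : (B - A0) * (A0 - A) = (A0 - A) * (B - A0) :=
        diff_comm (hcomm B hB A0 hA0) (hcomm B hB A hA) rfl (hcomm A0 hA0 A hA)
      have hsplit : Bf a μ (B - A)
          = Bf a μ (B - A0) + Bf a μ (A0 - A) + 2 * Bc a μ (B - A0) (A0 - A) := by
        rw [← Bf_add, sub_add_sub_cancel]
      have hle := Bc_le ha μ (B - A0) (A0 - A)
      have hnn1 := Bf_nonneg ha μ (B - A0)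
      have hnn2 := Bf_nonneg ha μ (A0 - A)
      rw [hBfsym, hphiA, hphiB]
      rw [abs_sub_comm,
        abs_of_nonneg (by linarith : (0:ℝ) ≤ Bf a μ (B - A0) - -Bf a μ (A0 - A))]
      linarith
    · have h2' : (A0 - B).PosSemidef := by
        rcases htot B hB A0 hA0 with h | h
        · exact h
        · exact absurd h h2
      have hphiB : phi a μ A0 B = -Bf a μ (A0 - B) := phi_of_neg h2
      have hc : (A0 - B) * (B - A) = (B - A) * (A0 - B) :=
        diff_comm (hcomm A0 hA0 B hB) (hcomm A0 hA0 A hA) rfl (hcomm B hB A hA)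
      have hcross := Bc_nonneg ha μ h2' hBA hc
      have hsplit : Bf a μ (A0 - A)
          = Bf a μ (A0 - B) + Bf a μ (B - A) + 2 * Bc a μ (A0 - B) (B - A) := by
        rw [← Bf_add, sub_add_sub_cancel]
      rw [hBfsym, hphiA, hphiB]
      have h4 : -Bf a μ (A0 - B) - -Bf a μ (A0 - A)
          ≤ |-Bf a μ (A0 - A) - -Bf a μ (A0 - B)| := by
        rw [abs_sub_comm]; exact le_abs_self _
      have h5 : (0:ℝ) ≤ |-Bf a μ (A0 - A) - -Bf a μ (A0 - B)| := abs_nonneg _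
      linarith

lemma embed {a : ℝ} (ha : 0 ≤ a) (μ : Fin n → ℝ)
    {F : Set (Matrix (Fin n) (Fin n) ℝ)} (hF : IsOrderedSmootherFamily F)
    {A0 A B : Matrix (Fin n) (Fin n) ℝ} (hA0 : A0 ∈ F) (hA : A ∈ F) (hB : B ∈ F) :
    Bf a μ (A - B) ≤ 2 * |phi a μ A0 A - phi a μ A0 B| := by
  rcases hF.2.2 A hA B hB with h | h
  · exact embed_le ha μ hF hA0 hA hB h
  · have := embed_le ha μ hF hA0 hB hA h
    rwa [show B - A = -(A - B) from (neg_sub A B).symm, Bf_neg, abs_sub_comm] at this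

lemma two_mul_le_two_pow : ∀ k : ℕ, 2 * k ≤ 2 ^ k := by
  intro k
  induction k with
  | zero => norm_num
  | succ k ih =>
    rcases Nat.eq_zero_or_pos k with h | h
    · subst h; norm_num
    · have h2 : 2 ≤ 2 ^ k := by
        calc 2 = 2 * 1 := by norm_num
        _ ≤ 2 * k := by omega
        _ ≤ 2 ^ k := ih
      calc 2 * (k + 1) = 2 * k + 2 := by ring
        _ ≤ 2 ^ k + 2 ^ k := by omega
        _ = 2 ^ (k + 1) := by ring

lemma dmet_eq_sqrt_Bf (a : ℝ) (μ : Fin n → ℝ) (A B : Matrix (Fin n) (Fin n) ℝ) :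
    dmet a μ A B = Real.sqrt (Bf a μ (A - B)) := rfl

lemma gamma_le {a : ℝ} (ha : 0 ≤ a) (μ : Fin n → ℝ)
    {F : Set (Matrix (Fin n) (Fin n) ℝ)} (hne : F.Nonempty)
    (hF : IsOrderedSmootherFamily F) {α : ℝ} (hα : 1 ≤ α) :
    gammaFunc α F (dmet a μ) ≤ 8 * ediam F (dmet a μ) := by
  classical
  by_cases hD : ediam F (dmet a μ) = ⊤
  · rw [hD]
    simp
  obtain ⟨A0, hA0⟩ := hne
  set Δ : ℝ := (ediam F (dmet a μ)).toReal with hΔdef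
  have hΔ0 : 0 ≤ Δ := ENNReal.toReal_nonneg
  have hdnn : ∀ A B : Matrix (Fin n) (Fin n) ℝ, 0 ≤ dmet a μ A B :=
    fun A B => Real.sqrt_nonneg _
  have hdle : ∀ A ∈ F, ∀ B ∈ F, dmet a μ A B ≤ Δ := by
    intro A hA B hB
    have h1 : ENNReal.ofReal (dmet a μ A B) ≤ ediam F (dmet a μ) := by
      refine le_trans ?_ (le_iSup₂ (f := fun A (_ : A ∈ F) => ⨆ B ∈ F,
        ENNReal.ofReal (dmet a μ A B)) A hA)
      exact le_iSup₂ (f := fun B (_ : B ∈ F) => ENNReal.ofReal (dmet a μ A B)) B hB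
    have h2 := ENNReal.toReal_mono hD h1
    rwa [ENNReal.toReal_ofReal (hdnn A B)] at h2
  have hBfle : ∀ A ∈ F, ∀ B ∈ F, Bf a μ (A - B) ≤ Δ ^ 2 := by
    intro A hA B hB
    have h1 : Real.sqrt (Bf a μ (A - B)) ≤ Δ := by
      rw [← dmet_eq_sqrt_Bf]; exact hdle A hA B hB
    have h2 : Bf a μ (A - B) = Real.sqrt (Bf a μ (A - B)) ^ 2 :=
      (Real.sq_sqrt (Bf_nonneg ha μ _)).symm
    rw [h2]
    exact pow_le_pow_left₀ (Real.sqrt_nonneg _) h1 2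
  have hphile : ∀ A ∈ F, |phi a μ A0 A| ≤ Δ ^ 2 := by
    intro A hA
    rw [phi_abs ha]
    exact hBfle A hA A0 hA0
  -- nets
  set m : ℕ → ℕ := fun k => 2 ^ 2 ^ k with hmdef
  have hm1 : ∀ k, 1 ≤ m k := fun k => Nat.one_le_two_pow
  set L : ℕ → ℝ := fun k => 2 * Δ ^ 2 / (2:ℝ) ^ (2 ^ k) with hLdef
  have hL0 : ∀ k, 0 ≤ L k := fun k => by positivity
  have hmL : ∀ k, (m k : ℝ) * L k = 2 * Δ ^ 2 := by
    intro k
    have : ((m k : ℕ) : ℝ) = (2:ℝ) ^ (2 ^ k) := by push_cast [hmdef]; ring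
    rw [hLdef]
    field_simp [this]
    rw [this]; ring
  set idx : ℕ → Matrix (Fin n) (Fin n) ℝ → ℕ :=
    fun k A => min ⌊(phi a μ A0 A + Δ ^ 2) / L k⌋₊ (m k - 1) with hidxdef
  set rep : ℕ → ℕ → Matrix (Fin n) (Fin n) ℝ :=
    fun k j => if h : ∃ A ∈ F, idx k A = j then h.choose else A0 with hrepdef
  have hrepF : ∀ k j, rep k j ∈ F := by
    intro k j
    rw [hrepdef]
    dsimp only
    split
    · next h => exact h.choose_spec.1
    · exact hA0
  have hrep_idx : ∀ k, ∀ A ∈ F, idx k (rep k (idx k A)) = idx k A := by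
    intro k A hA
    have hex : ∃ B ∈ F, idx k B = idx k A := ⟨A, hA, rfl⟩
    rw [hrepdef]
    dsimp only
    rw [dif_pos hex]
    exact hex.choose_spec.2
  -- points with the same index have close phi
  have hnear : ∀ k, ∀ A ∈ F, ∀ B ∈ F, idx k A = idx k B →
      |phi a μ A0 A - phi a μ A0 B| ≤ L k := by
    intro k A hA B hB hidx
    by_cases hLz : L k = 0
    · have hΔz : Δ ^ 2 = 0 := by
        have := hmL k
        rw [hLz, mul_zero] at this
        nlinarith
      have h1 := hphile A hA
      have h2 := hphile B hB
      rw [hΔz] at h1 h2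
      have := abs_sub_abs_le_abs_sub (phi a μ A0 A) (phi a μ A0 B)
      rw [hLz]
      calc |phi a μ A0 A - phi a μ A0 B| ≤ |phi a μ A0 A| + |phi a μ A0 B| :=
        abs_sub _ _
      _ ≤ 0 := by linarith
    · have hL : 0 < L k := lt_of_le_of_ne (hL0 k) (Ne.symm hLz)
      have key : ∀ C ∈ F, (idx k C : ℝ) * L k ≤ phi a μ A0 C + Δ ^ 2 ∧
          phi a μ A0 C + Δ ^ 2 ≤ ((idx k C : ℝ) + 1) * L k := by
        intro C hC
        set x := phi a μ A0 C + Δ ^ 2 with hxdef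
        have hx0 : 0 ≤ x := by
          have := hphile C hC
          have := neg_abs_le (phi a μ A0 C)
          simp only [hxdef]
          nlinarith [hphile C hC, neg_abs_le (phi a μ A0 C)]
        have hx2 : x ≤ (m k : ℝ) * L k := by
          rw [hmL k]
          have := hphile C hC
          have := le_abs_self (phi a μ A0 C)
          nlinarith
        constructor
        · have h1 : idx k C ≤ ⌊x / L k⌋₊ := min_le_left _ _
          have h2 : (idx k C : ℝ) ≤ x / L k :=
            le_trans (by exact_mod_cast Nat.cast_le.mpr h1) (Nat.floor_le (by positivity))
          have h3 := mul_le_mul_of_nonneg_right h2 (le_of_lt hL)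
          rwa [div_mul_cancel₀ _ (ne_of_gt hL)] at h3
        · by_cases hcase : ⌊x / L k⌋₊ ≤ m k - 1
          · have heq : idx k C = ⌊x / L k⌋₊ := min_eq_left hcase
            have h3 : x / L k < (⌊x / L k⌋₊ : ℝ) + 1 := Nat.lt_floor_add_one _
            have h4 := mul_lt_mul_of_pos_right h3 hL
            rw [div_mul_cancel₀ _ (ne_of_gt hL)] at h4
            rw [heq]
            exact le_of_lt h4
          · have heq : idx k C = m k - 1 := min_eq_right (le_of_not_ge hcase)
            have hm : ((m k - 1 : ℕ) : ℝ) + 1 = (m k : ℝ) := by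
              push_cast [Nat.cast_sub (hm1 k)]
              ring
            rw [heq, hm]
            exact hx2
      obtain ⟨hA1, hA2⟩ := key A hA
      obtain ⟨hB1, hB2⟩ := key B hB
      rw [hidx] at hA1 hA2
      rw [abs_sub_le_iff]
      constructor <;> nlinarith
  -- the admissible sequence
  set Ts : ℕ → Set (Matrix (Fin n) (Fin n) ℝ) :=
    fun k => if k = 0 then {A0} else rep k '' ↑(Finset.range (m k)) with hTsdef
  have hadm : IsAdmissible F Ts := by
    refine ⟨?_, ?_, ?_⟩
    · intro k
      rw [hTsdef]
      dsimp only
      split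
      · simp only [Set.singleton_subset_iff]; exact hA0
      · rintro _ ⟨j, _, rfl⟩
        exact hrepF k j
    · rw [hTsdef]
      simp [Set.ncard_singleton]
    · intro k
      rw [hTsdef]
      dsimp only
      split
      · constructor
        · exact Set.finite_singleton _
        · rw [Set.ncard_singleton]
          exact Nat.one_le_two_pow
      · constructor
        · exact ((Finset.range (m k)).finite_toSet.image _)
        · calc (rep k '' ↑(Finset.range (m k))).ncard
              ≤ (↑(Finset.range (m k)) : Set ℕ).ncard :=
                Set.ncard_image_le (Finset.range (m k)).finite_toSet
          _ = m k := by rw [Set.ncard_coe_finset, Finset.card_range]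
  -- distance to the nets
  have hnet : ∀ k, k ≠ 0 → ∀ t ∈ F,
      setDist (dmet a μ) t (Ts k) ≤ ENNReal.ofReal (Real.sqrt (2 * L k)) := by
    intro k hk t ht
    set s := rep k (idx k t) with hsdef
    have hsF : s ∈ F := hrepF k _
    have hsTs : s ∈ Ts k := by
      rw [hTsdef]
      dsimp only
      rw [if_neg hk]
      refine ⟨idx k t, ?_, rfl⟩
      simp only [Finset.coe_range, Set.mem_Iio]
      calc idx k t ≤ m k - 1 := min_le_right _ _
      _ < m k := by have := hm1 k; omega
    have hclose : |phi a μ A0 t - phi a μ A0 s| ≤ L k :=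
      hnear k t ht s hsF (hrep_idx k t ht).symm
    have hd : dmet a μ t s ≤ Real.sqrt (2 * L k) := by
      rw [dmet_eq_sqrt_Bf]
      apply Real.sqrt_le_sqrt
      calc Bf a μ (t - s) ≤ 2 * |phi a μ A0 t - phi a μ A0 s| := embed ha μ hF hA0 ht hsF
      _ ≤ 2 * L k := by linarith
    calc setDist (dmet a μ) t (Ts k) ≤ ENNReal.ofReal (dmet a μ t s) := by
          exact iInf₂_le_of_le s hsTs le_rfl
    _ ≤ ENNReal.ofReal (Real.sqrt (2 * L k)) := ENNReal.ofReal_le_ofReal hd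
  -- the sqrt simplification
  have hsqrtL : ∀ k : ℕ, Real.sqrt (2 * L (k + 1)) = 2 * Δ / (2:ℝ) ^ (2 ^ k) := by
    intro k
    have hp : (2:ℝ) ^ (2 ^ (k+1)) = ((2:ℝ) ^ (2 ^ k)) ^ 2 := by
      rw [← pow_mul, pow_succ]
    have h1 : 2 * L (k + 1) = (2 * Δ / (2:ℝ) ^ (2 ^ k)) ^ 2 := by
      rw [hLdef]
      dsimp only
      rw [hp]
      field_simp
    rw [h1, Real.sqrt_sq (by positivity)]
  -- per-term real bound
  have hterm : ∀ k : ℕ,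
      (2:ℝ) ^ (((k : ℝ) + 1) / α) * (2 * Δ / (2:ℝ) ^ (2 ^ k)) ≤ 4 * Δ * (2⁻¹ : ℝ) ^ k := by
    intro k
    have hb : (1:ℝ) ≤ 2 := one_le_two
    have hexp : ((k : ℝ) + 1) / α + 1 - ((2 ^ k : ℕ) : ℝ) ≤ 2 - (k : ℝ) := by
      have h1 : ((k : ℝ) + 1) / α ≤ (k : ℝ) + 1 :=
        div_le_self (by positivity) hα
      have h2 : 2 * (k : ℝ) ≤ ((2 ^ k : ℕ) : ℝ) := by
        exact_mod_cast two_mul_le_two_pow k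
      linarith
    have hrw : (2:ℝ) ^ (((k : ℝ) + 1) / α) * (2 * Δ / (2:ℝ) ^ (2 ^ k))
        = Δ * (2:ℝ) ^ (((k : ℝ) + 1) / α + 1 - ((2 ^ k : ℕ) : ℝ)) := by
      rw [Real.rpow_sub (by norm_num), Real.rpow_add (by norm_num), Real.rpow_one,
        Real.rpow_natCast]
      field_simp
    have hrw2 : (4:ℝ) * Δ * (2⁻¹ : ℝ) ^ k = Δ * (2:ℝ) ^ ((2:ℝ) - (k:ℝ)) := by
      rw [Real.rpow_sub (by norm_num)]
      rw [show ((2:ℝ) ^ (2:ℝ)) = 4 by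
        rw [show (2:ℝ) = ((2:ℕ):ℝ) by norm_num, Real.rpow_natCast]; norm_num]
      rw [Real.rpow_natCast]
      field_simp
      rw [mul_assoc, ← mul_pow]; norm_num
    rw [hrw, hrw2]
    exact mul_le_mul_of_nonneg_left
      (Real.rpow_le_rpow_of_exponent_le hb hexp) hΔ0
  -- putting it together
  have hmain : gammaFunc α F (dmet a μ) ≤ ∑' k : ℕ, ENNReal.ofReal (4 * Δ * (2⁻¹ : ℝ) ^ k) := by
    calc gammaFunc α F (dmet a μ)
        ≤ ⨆ t ∈ F, ∑' k : ℕ,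
          ENNReal.ofReal (2 ^ (((k : ℝ) + 1) / α)) * setDist (dmet a μ) t (Ts (k + 1)) := by
          exact iInf₂_le Ts hadm
    _ ≤ ∑' k : ℕ, ENNReal.ofReal (4 * Δ * (2⁻¹ : ℝ) ^ k) := by
        refine iSup₂_le fun t ht => ?_
        refine ENNReal.tsum_le_tsum fun k => ?_
        calc ENNReal.ofReal (2 ^ (((k : ℝ) + 1) / α)) * setDist (dmet a μ) t (Ts (k + 1))
            ≤ ENNReal.ofReal (2 ^ (((k : ℝ) + 1) / α)) *
              ENNReal.ofReal (Real.sqrt (2 * L (k + 1))) := by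
              exact mul_le_mul_right (hnet (k+1) (Nat.succ_ne_zero k) t ht) _
        _ = ENNReal.ofReal ((2:ℝ) ^ (((k : ℝ) + 1) / α) * (2 * Δ / (2:ℝ) ^ (2 ^ k))) := by
              rw [hsqrtL k, ← ENNReal.ofReal_mul (by positivity)]
        _ ≤ ENNReal.ofReal (4 * Δ * (2⁻¹ : ℝ) ^ k) := ENNReal.ofReal_le_ofReal (hterm k)
  have hsum : ∑' k : ℕ, ENNReal.ofReal (4 * Δ * (2⁻¹ : ℝ) ^ k)
      = ENNReal.ofReal (4 * Δ) * 2 := by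
    have h1 : ∀ k : ℕ, ENNReal.ofReal (4 * Δ * (2⁻¹ : ℝ) ^ k)
        = ENNReal.ofReal (4 * Δ) * (2⁻¹ : ℝ≥0∞) ^ k := by
      intro k
      rw [ENNReal.ofReal_mul (by positivity), ENNReal.ofReal_pow (by norm_num)]
      congr 2
      rw [ENNReal.ofReal_inv_of_pos (by norm_num)]
      congr 1
      exact ENNReal.ofReal_ofNat 2
    simp_rw [h1]
    rw [ENNReal.tsum_mul_left, ENNReal.tsum_geometric]
    congr 1
    rw [ENNReal.one_sub_inv_two, inv_inv]
  calc gammaFunc α F (dmet a μ) ≤ ENNReal.ofReal (4 * Δ) * 2 := hmain.trans (le_of_eq hsum)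
  _ = 8 * ENNReal.ofReal Δ := by
      rw [ENNReal.ofReal_mul (by norm_num), ENNReal.ofReal_ofNat 4]
      ring
  _ = 8 * ediam F (dmet a μ) := by
      rw [hΔdef, ENNReal.ofReal_toReal hD]

end GammaAux

/-- For a family of ordered linear smoothers and the semimetric
`d(A,B)² = a‖A−B‖_F² + ‖(A−B)μ‖²`, the generic chaining functionals are bounded by
a constant multiple of the diameter: `γ₂(F, d) + γ₁(F, d) ≤ C₄ Δ(F, d)`. -/
theorem gamma_functionals_ordered_smoothers_bounded_by_diameter :
    ∃ C4 : ℝ, 0 < C4 ∧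
      ∀ (n : ℕ), 1 ≤ n →
      ∀ (a : ℝ), 0 ≤ a →
      ∀ (μ : Fin n → ℝ) (F : Set (Matrix (Fin n) (Fin n) ℝ)),
        F.Nonempty → IsOrderedSmootherFamily F →
        gammaFunc 2 F (dmet a μ) + gammaFunc 1 F (dmet a μ)
          ≤ ENNReal.ofReal C4 * ediam F (dmet a μ) := by
  refine ⟨16, by norm_num, ?_⟩
  intro n hn a ha μ F hne hF
  have h2 := GammaAux.gamma_le ha μ hne hF (α := 2) one_le_two
  have h1 := GammaAux.gamma_le ha μ hne hF (α := 1) le_rfl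
  calc gammaFunc 2 F (dmet a μ) + gammaFunc 1 F (dmet a μ)
      ≤ 8 * ediam F (dmet a μ) + 8 * ediam F (dmet a μ) := add_le_add h2 h1
  _ = 16 * ediam F (dmet a μ) := by rw [← add_mul]; norm_num
  _ = ENNReal.ofReal 16 * ediam F (dmet a μ) := by
      rw [ENNReal.ofReal_ofNat]
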